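/- Let δ > 0, ψ_a < ψ_b, φ₀ ∈ ℝ, and let q be of class C² on an open set containing the rectangle R = [φ₀, φ₀+δ]×[ψ_a,ψ_b], satisfying (⋆) on R, with q(φ₀,ψ) = c_* for every ψ ∈ [ψ_a,ψ_b] and c_* ≤ q < q_max on R. Then: (a) ∂q/∂φ(φ₀,ψ) = 0 for every ψ ∈ [ψ_a,ψ_b]; (b) with β(φ,ψ) = (−A'(q(φ,ψ))/B'(q(φ,ψ)))^{1/2} ≥ 0 on R, for every ψ̄ ∈ [ψ_a,ψ_b) the only continuous function Φ : [ψ̄,ψ_b] → [φ₀, φ₀+δ] with Φ(ψ̄) = φ₀ that is differentiable on (ψ̄,ψ_b] with Φ'(ψ) = β(Φ(ψ),ψ) is the constant function Φ ≡ φ₀. In particular, the positive and negative characteristics issuing from any point of the sonic segment {φ₀}×[ψ_a,ψ_b] coincide with the segment itself and never enter the supersonic region. -/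

import Mathlib

open Real Set MeasureTheory Filter

noncomputable section

/-- The density function `ρ(t) = (1 − ((γ−1)/2) t)^{1/(γ−1)}`. -/
def rhoF (γ t : ℝ) : ℝ := (1 - (γ - 1) / 2 * t) ^ ((1 : ℝ) / (γ - 1))

/-- The critical (sonic) speed `c_* = (2/(γ+1))^{1/2}`. -/
def cstar (γ : ℝ) : ℝ := Real.sqrt (2 / (γ + 1))

/-- The maximal speed `q_max = (2/(γ−1))^{1/2}`. -/
def qmaxF (γ : ℝ) : ℝ := Real.sqrt (2 / (γ - 1))

/-- `A(q) = ∫_{c_*}^q (ρ(s²)+2s²ρ'(s²))/(s ρ(s²)²) ds`. -/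
def Afun (γ q : ℝ) : ℝ :=
  ∫ s in (cstar γ)..q,
    (rhoF γ (s ^ 2) + 2 * s ^ 2 * deriv (rhoF γ) (s ^ 2)) / (s * (rhoF γ (s ^ 2)) ^ 2)

/-- `B(q) = ∫_{c_*}^q ρ(s²)/s ds`. -/
def Bfun (γ q : ℝ) : ℝ := ∫ s in (cstar γ)..q, rhoF γ (s ^ 2) / s

/-- Inverse of `A` restricted to `[c_*, q_max)`. -/
def AplusInv (γ : ℝ) : ℝ → ℝ := Function.invFunOn (Afun γ) (Ico (cstar γ) (qmaxF γ))

/-- `K(s) = B(A₊⁻¹(s))`. -/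
def Kfun (γ s : ℝ) : ℝ := Bfun γ (AplusInv γ s)

/-- `b(s) = −K'(s)`. -/
def bfun (γ s : ℝ) : ℝ := -deriv (Kfun γ) s

/-- `p(s) = −K''(s)`. -/
def pfun (γ s : ℝ) : ℝ := -deriv (deriv (Kfun γ)) s

/-- Partial derivative in the first (potential) variable. -/
def pdx (u : ℝ × ℝ → ℝ) (p : ℝ × ℝ) : ℝ := deriv (fun x => u (x, p.2)) p.1

/-- Partial derivative in the second (stream) variable. -/
def pdy (u : ℝ × ℝ → ℝ) (p : ℝ × ℝ) : ℝ := deriv (fun y => u (p.1, y)) p.2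

/-- The Chaplygin equation (⋆) at a point. -/
def chap (γ : ℝ) (q : ℝ × ℝ → ℝ) (p : ℝ × ℝ) : Prop :=
  pdx (pdx fun z => Afun γ (q z)) p + pdy (pdy fun z => Bfun γ (q z)) p = 0

/-!
Along the sonic segment `B(q)` is constant in `ψ`, and since `A'(c_*) = 0` the Chaplygin equation
reduces there to `A''(c_*) q_φ² = 0`; as `A''(c_*) < 0`, `q_φ` vanishes on the segment. A
second-order Taylor expansion in `φ` then gives `q - c_* = O((φ - φ₀)²)`, while `-A'/B'` vanishes to
first order at `c_*`, so the characteristic slope `β` is `O(φ - φ₀)`. A characteristic `Φ` issuing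
from the segment therefore satisfies `0 ≤ (Φ - φ₀)' ≤ C (Φ - φ₀)` with `Φ - φ₀ = 0` initially, and
Gronwall's argument forces `Φ ≡ φ₀`.
-/

open Topology

theorem image_le_add_mul_sq_of_deriv_eq_zero {f f' f'' : ℝ → ℝ} {a b M : ℝ}
    (hf : ∀ x ∈ Icc a b, HasDerivAt f (f' x) x) (hf' : ∀ x ∈ Icc a b, HasDerivAt f' (f'' x) x)
    (hM : ∀ x ∈ Icc a b, f'' x ≤ M) (ha : f' a = 0) {x : ℝ} (hx : x ∈ Icc a b) :
    f x ≤ f a + M / 2 * (x - a) ^ 2 := by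
  have hlin : ∀ y : ℝ, HasDerivAt (fun y => M * (y - a)) M y := fun y => by
    simpa using ((hasDerivAt_id y).sub_const a).const_mul M
  have hquad : ∀ y : ℝ, HasDerivAt (fun y => f a + M / 2 * (y - a) ^ 2) (M * (y - a)) y :=
    fun y => ((((hasDerivAt_id y).sub_const a).pow 2).const_mul (M / 2)).const_add (f a)
      |>.congr_deriv (by norm_num; ring)
  have hf'_le : ∀ y ∈ Icc a b, f' y ≤ M * (y - a) :=
    image_le_of_deriv_right_le_deriv_boundary
      (fun y hy => (hf' y hy).continuousAt.continuousWithinAt)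
      (fun y hy => (hf' y (Ico_subset_Icc_self hy)).hasDerivWithinAt) (by simp [ha])
      (fun y _ => (hlin y).continuousAt.continuousWithinAt) (fun y _ => (hlin y).hasDerivWithinAt)
      (fun y hy => hM y (Ico_subset_Icc_self hy))
  exact image_le_of_deriv_right_le_deriv_boundary
    (fun y hy => (hf y hy).continuousAt.continuousWithinAt)
    (fun y hy => (hf y (Ico_subset_Icc_self hy)).hasDerivWithinAt) (by simp)
    (fun y _ => (hquad y).continuousAt.continuousWithinAt) (fun y _ => (hquad y).hasDerivWithinAt)
    (fun y hy => hf'_le y (Ico_subset_Icc_self hy)) hx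

theorem image_nonpos_of_deriv_le_mul {f f' : ℝ → ℝ} {a b C : ℝ}
    (hf : ContinuousOn f (Icc a b)) (hf' : ∀ x ∈ Ioo a b, HasDerivAt f (f' x) x)
    (hle : ∀ x ∈ Ioo a b, f' x ≤ C * f x) (ha : f a = 0) {x : ℝ} (hx : x ∈ Icc a b) :
    f x ≤ 0 := by
  -- the integrating factor `exp (-C x)` turns `f' ≤ C f` into antitonicity
  have hg' : ∀ y ∈ Ioo a b, HasDerivAt (fun y => exp (-C * y) * f y)
      (exp (-C * y) * (f' y - C * f y)) y := fun y hy =>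
    (((hasDerivAt_id y).const_mul (-C)).exp.mul (hf' y hy)).congr_deriv (by simp; ring)
  have hanti : AntitoneOn (fun y => exp (-C * y) * f y) (Icc a b) := by
    refine antitoneOn_of_hasDerivWithinAt_nonpos (f' := fun y => exp (-C * y) * (f' y - C * f y))
      (convex_Icc a b)
      ((continuous_exp.comp (continuous_const.mul continuous_id)).continuousOn.mul hf)
      (fun y hy => ?_) (fun y hy => ?_)
    · rw [interior_Icc] at hy ⊢
      exact (hg' y hy).hasDerivWithinAt
    · rw [interior_Icc] at hy
      exact mul_nonpos_of_nonneg_of_nonpos (exp_pos _).le (sub_nonpos.2 (hle y hy))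
  have := hanti (left_mem_Icc.2 (hx.1.trans hx.2)) hx hx.1
  simp only [ha, mul_zero] at this
  exact nonpos_of_mul_nonpos_right this (exp_pos _)

theorem deriv_deriv_comp_of_deriv_eq_zero {f f' g g' : ℝ → ℝ} {x₀ a : ℝ}
    (hg : ∀ᶠ y in 𝓝 (f x₀), HasDerivAt g (g' y) y) (hg' : HasDerivAt g' a (f x₀))
    (hg'0 : g' (f x₀) = 0) (hf : ∀ᶠ x in 𝓝 x₀, HasDerivAt f (f' x) x)
    (hf' : DifferentiableAt ℝ f' x₀) :
    deriv (deriv fun x => g (f x)) x₀ = a * f' x₀ ^ 2 := by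
  have hderiv : deriv (fun x => g (f x)) =ᶠ[𝓝 x₀] fun x => g' (f x) * f' x := by
    filter_upwards [hf, hf.self_of_nhds.continuousAt.tendsto.eventually hg] with x hfx hgx
    exact (hgx.comp x hfx).deriv
  rw [hderiv.deriv_eq]
  have hprod : HasDerivAt (fun x => g' (f x) * f' x) (a * f' x₀ * f' x₀ + g' (f x₀) * deriv f' x₀)
      x₀ := (hg'.comp x₀ hf.self_of_nhds).mul hf'.hasDerivAt
  rw [hprod.deriv, hg'0]
  ring

theorem hasDerivAt_integral_of_continuousOn_Ioo {g : ℝ → ℝ} {l u c x : ℝ}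
    (hg : ContinuousOn g (Ioo l u)) (hc : c ∈ Ioo l u) (hx : x ∈ Ioo l u) :
    HasDerivAt (fun y => ∫ s in c..y, g s) (g x) x :=
  intervalIntegral.integral_hasDerivAt_right
    ((hg.mono (ordConnected_Ioo.uIcc_subset hc hx)).intervalIntegrable)
    (hg.stronglyMeasurableAtFilter isOpen_Ioo x hx) (hg.continuousAt (isOpen_Ioo.mem_nhds hx))

theorem DifferentiableAt.hasDerivAt_pdx {u : ℝ × ℝ → ℝ} {p : ℝ × ℝ}
    (hu : DifferentiableAt ℝ u p) : HasDerivAt (fun x => u (x, p.2)) (pdx u p) p.1 :=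
  (hu.comp p.1 (differentiableAt_id.prodMk (differentiableAt_const p.2))).hasDerivAt

theorem pdx_eq_fderiv {u : ℝ × ℝ → ℝ} {p : ℝ × ℝ} (hu : DifferentiableAt ℝ u p) :
    pdx u p = fderiv ℝ u p (1, 0) :=
  (hu.hasDerivAt_pdx.unique
    (hu.hasFDerivAt.comp_hasDerivAt p.1 ((hasDerivAt_id p.1).prodMk (hasDerivAt_const _ _))))

theorem ContDiffOn.pdx {u : ℝ × ℝ → ℝ} {V : Set (ℝ × ℝ)} {m n : WithTop ℕ∞}
    (hu : ContDiffOn ℝ n u V) (hV : IsOpen V) (hmn : m + 1 ≤ n) : ContDiffOn ℝ m (pdx u) V :=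
  ((hu.fderiv_of_isOpen hV hmn).clm_apply contDiffOn_const).congr fun p hp =>
    pdx_eq_fderiv ((hu.differentiableOn (by rintro rfl; simp at hmn)).differentiableAt
      (hV.mem_nhds hp))

theorem pdy_pdy_eq_zero_of_eventually_const {u : ℝ × ℝ → ℝ} {p : ℝ × ℝ} {c : ℝ}
    (hu : ∀ᶠ y in 𝓝 p.2, u (p.1, y) = c) : pdy (pdy u) p = 0 := by
  have hpdy : (fun y => pdy u (p.1, y)) =ᶠ[𝓝 p.2] fun _ => 0 := by
    filter_upwards [hu.eventually_nhds] with y hy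
    exact (show (fun y => u (p.1, y)) =ᶠ[𝓝 y] fun _ => c from hy).deriv_eq.trans (deriv_const y c)
  exact hpdy.deriv_eq.trans (deriv_const _ _)

/-- The squared sound speed at flow speed `q`, by Bernoulli's law in the normalisation of `rhoF`. -/
def soundSpeedSq (γ q : ℝ) : ℝ := 1 - (γ - 1) / 2 * q ^ 2

def Aprime (γ q : ℝ) : ℝ := (soundSpeedSq γ q - q ^ 2) / (q * rhoF γ (q ^ 2) * soundSpeedSq γ q)

theorem rhoF_sq (γ q : ℝ) : rhoF γ (q ^ 2) = soundSpeedSq γ q ^ (1 / (γ - 1)) := rfl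

theorem continuous_soundSpeedSq (γ : ℝ) : Continuous (soundSpeedSq γ) := by
  unfold soundSpeedSq; fun_prop

section GasDynamics

variable {γ : ℝ}

theorem cstar_pos (hγ : 1 < γ) : 0 < cstar γ := sqrt_pos.2 (by positivity)

theorem cstar_sq (hγ : 1 < γ) : cstar γ ^ 2 = 2 / (γ + 1) := sq_sqrt (by positivity)

theorem soundSpeedSq_cstar (hγ : 1 < γ) : soundSpeedSq γ (cstar γ) = cstar γ ^ 2 := by
  rw [soundSpeedSq, cstar_sq hγ]
  field_simp
  ring

theorem soundSpeedSq_pos (hγ : 1 < γ) {q : ℝ} (hq0 : 0 ≤ q) (hq : q < qmaxF γ) :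
    0 < soundSpeedSq γ q := by
  have hsq : q ^ 2 < 2 / (γ - 1) := by
    rw [← sq_sqrt (div_pos two_pos (sub_pos.2 hγ)).le]
    exact pow_lt_pow_left₀ hq hq0 two_ne_zero
  rw [lt_div_iff₀ (sub_pos.2 hγ)] at hsq
  unfold soundSpeedSq
  nlinarith

theorem soundSpeedSq_le_soundSpeedSq (hγ : 1 < γ) {q r : ℝ} (hq0 : 0 ≤ q) (hqr : q ≤ r) :
    soundSpeedSq γ r ≤ soundSpeedSq γ q := by
  unfold soundSpeedSq
  have := pow_le_pow_left₀ hq0 hqr 2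
  nlinarith

theorem cstar_lt_qmaxF (hγ : 1 < γ) : cstar γ < qmaxF γ :=
  sqrt_lt_sqrt (by positivity) (div_lt_div_of_pos_left two_pos (sub_pos.2 hγ) (by linarith))

theorem cstar_mem_Ioo (hγ : 1 < γ) : cstar γ ∈ Ioo 0 (qmaxF γ) := ⟨cstar_pos hγ, cstar_lt_qmaxF hγ⟩

theorem hasDerivAt_rhoF (hγ : 1 < γ) {t : ℝ} (ht : 0 < 1 - (γ - 1) / 2 * t) :
    HasDerivAt (rhoF γ) (-(1 / 2) * (1 - (γ - 1) / 2 * t) ^ (1 / (γ - 1) - 1)) t := by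
  have hbase : HasDerivAt (fun t => 1 - (γ - 1) / 2 * t) (-((γ - 1) / 2)) t := by
    simpa using ((hasDerivAt_id t).const_mul ((γ - 1) / 2)).const_sub 1
  refine ((hasDerivAt_rpow_const (Or.inl ht.ne')).comp t hbase).congr_deriv ?_
  field_simp [(sub_pos.2 hγ).ne']

theorem Afun_integrand_eq (hγ : 1 < γ) {s : ℝ} (hs : s ∈ Ioo 0 (qmaxF γ)) :
    (rhoF γ (s ^ 2) + 2 * s ^ 2 * deriv (rhoF γ) (s ^ 2)) / (s * rhoF γ (s ^ 2) ^ 2)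
      = Aprime γ s := by
  have hc := soundSpeedSq_pos hγ hs.1.le hs.2
  rw [(hasDerivAt_rhoF hγ hc).deriv, Aprime, rhoF_sq, ← soundSpeedSq]
  have hs0 := hs.1
  set c := soundSpeedSq γ s
  have hsplit : c ^ (1 / (γ - 1)) = c ^ (1 / (γ - 1) - 1) * c := by
    rw [← rpow_add_one hc.ne', sub_add_cancel]
  have hpos := rpow_pos_of_pos hc (1 / (γ - 1) - 1)
  rw [hsplit, div_eq_div_iff (by positivity) (by positivity)]
  ring

theorem continuous_rhoF_sq (hγ : 1 < γ) : Continuous fun q => rhoF γ (q ^ 2) :=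
  (continuous_soundSpeedSq γ).rpow_const fun _ => Or.inr (one_div_pos.2 (sub_pos.2 hγ)).le

theorem rhoF_sq_pos (hγ : 1 < γ) {q : ℝ} (hq0 : 0 ≤ q) (hq : q < qmaxF γ) : 0 < rhoF γ (q ^ 2) :=
  rpow_pos_of_pos (soundSpeedSq_pos hγ hq0 hq) _

theorem continuousOn_Aprime (hγ : 1 < γ) : ContinuousOn (Aprime γ) (Ioo 0 (qmaxF γ)) := by
  have hc := continuous_soundSpeedSq γ
  refine ContinuousOn.div (hc.sub (continuous_pow 2)).continuousOn
    ((continuous_id.mul (continuous_rhoF_sq hγ)).mul hc).continuousOn fun s hs => ?_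
  have := rhoF_sq_pos hγ hs.1.le hs.2
  have := soundSpeedSq_pos hγ hs.1.le hs.2
  have := hs.1
  positivity

theorem hasDerivAt_Afun (hγ : 1 < γ) {q : ℝ} (hq : q ∈ Ioo 0 (qmaxF γ)) :
    HasDerivAt (Afun γ) (Aprime γ q) q := by
  refine (hasDerivAt_integral_of_continuousOn_Ioo (continuousOn_Aprime hγ) (cstar_mem_Ioo hγ)
    hq).congr_of_eventuallyEq ?_
  filter_upwards [isOpen_Ioo.mem_nhds hq] with y hy
  exact intervalIntegral.integral_congr fun s hs =>
    Afun_integrand_eq hγ (ordConnected_Ioo.uIcc_subset (cstar_mem_Ioo hγ) hy hs)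

theorem hasDerivAt_Bfun (hγ : 1 < γ) {q : ℝ} (hq : q ∈ Ioo 0 (qmaxF γ)) :
    HasDerivAt (Bfun γ) (rhoF γ (q ^ 2) / q) q :=
  hasDerivAt_integral_of_continuousOn_Ioo
    ((continuous_rhoF_sq hγ).continuousOn.div continuousOn_id fun _ hs => hs.1.ne')
    (cstar_mem_Ioo hγ) hq

theorem Aprime_cstar (hγ : 1 < γ) : Aprime γ (cstar γ) = 0 := by
  rw [Aprime, soundSpeedSq_cstar hγ, sub_self, zero_div]

theorem exists_hasDerivAt_Aprime_cstar (hγ : 1 < γ) :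
    ∃ a < 0, HasDerivAt (Aprime γ) a (cstar γ) := by
  obtain ⟨hc0, hcq⟩ := cstar_mem_Ioo hγ
  have hc := soundSpeedSq_pos hγ hc0.le hcq
  have hρ := rhoF_sq_pos hγ hc0.le hcq
  have hnum : HasDerivAt (fun s => soundSpeedSq γ s - s ^ 2) (-((γ + 1) * cstar γ)) (cstar γ) := by
    unfold soundSpeedSq
    exact (((hasDerivAt_pow 2 _).const_mul _).const_sub 1 |>.sub (hasDerivAt_pow 2 _)).congr_deriv
      (by norm_num; ring)
  have hden : DifferentiableAt ℝ (fun s => s * rhoF γ (s ^ 2) * soundSpeedSq γ s) (cstar γ) := by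
    have hρd : DifferentiableAt ℝ (fun s => rhoF γ (s ^ 2)) (cstar γ) :=
      DifferentiableAt.comp (g := rhoF γ) (f := fun s => s ^ 2) (cstar γ)
        (hasDerivAt_rhoF hγ hc).differentiableAt (differentiableAt_pow 2)
    exact (differentiableAt_id.mul hρd).mul (by unfold soundSpeedSq; fun_prop)
  refine ⟨_, ?_, hnum.div hden.hasDerivAt (by positivity)⟩
  rw [soundSpeedSq_cstar hγ, sub_self, zero_mul, sub_zero]
  exact div_neg_of_neg_of_pos (mul_neg_of_neg_of_pos (by nlinarith) (by positivity))
    (by positivity)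

theorem neg_deriv_Afun_div_deriv_Bfun (hγ : 1 < γ) {q : ℝ} (hq : q ∈ Ioo 0 (qmaxF γ)) :
    -deriv (Afun γ) q / deriv (Bfun γ) q
      = (q ^ 2 - soundSpeedSq γ q) / (rhoF γ (q ^ 2) ^ 2 * soundSpeedSq γ q) := by
  have := rhoF_sq_pos hγ hq.1.le hq.2
  have := soundSpeedSq_pos hγ hq.1.le hq.2
  have := hq.1
  rw [(hasDerivAt_Afun hγ hq).deriv, (hasDerivAt_Bfun hγ hq).deriv, Aprime]
  field_simp
  ring

theorem exists_neg_deriv_Afun_div_deriv_Bfun_le (hγ : 1 < γ) {Q : ℝ} (hcQ : cstar γ ≤ Q)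
    (hQ : Q < qmaxF γ) :
    ∃ K, 0 ≤ K ∧ ∀ q ∈ Icc (cstar γ) Q,
      -deriv (Afun γ) q / deriv (Bfun γ) q ≤ K * (q - cstar γ) := by
  have hc0 := cstar_pos hγ
  have hQ0 : 0 < Q := hc0.trans_le hcQ
  have hcQ_pos := soundSpeedSq_pos hγ hQ0.le hQ
  have hρQ := rhoF_sq_pos hγ hQ0.le hQ
  refine ⟨(γ + 1) * Q / (rhoF γ (Q ^ 2) ^ 2 * soundSpeedSq γ Q), by positivity, fun q hq => ?_⟩
  have hq0 : 0 < q := hc0.trans_le hq.1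
  have hcq := soundSpeedSq_le_soundSpeedSq hγ hq0.le hq.2
  have hρ : rhoF γ (Q ^ 2) ≤ rhoF γ (q ^ 2) :=
    rpow_le_rpow hcQ_pos.le hcq (one_div_pos.2 (sub_pos.2 hγ)).le
  have hnum : q ^ 2 - soundSpeedSq γ q ≤ (γ + 1) * Q * (q - cstar γ) := by
    have hc2 : (γ + 1) * cstar γ ^ 2 = 2 := by rw [cstar_sq hγ]; field_simp
    have := mul_nonneg (sub_nonneg.2 hq.1) (by linarith [hq.2] : 0 ≤ 2 * Q - q - cstar γ)
    unfold soundSpeedSq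
    nlinarith
  rw [neg_deriv_Afun_div_deriv_Bfun hγ ⟨hq0, hq.2.trans_lt hQ⟩, div_mul_eq_mul_div]
  refine div_le_div₀ (mul_nonneg (by positivity) (sub_nonneg.2 hq.1)) hnum (by positivity)
    (mul_le_mul (pow_le_pow_left₀ hρQ.le hρ 2) hcq hcQ_pos.le (by positivity))

end GasDynamics

section Sonic

variable {γ : ℝ} {q : ℝ × ℝ → ℝ}

theorem pdx_eq_zero_of_chap_of_sonic (hγ : 1 < γ) {p : ℝ × ℝ}
    (hq : ∀ᶠ z in 𝓝 p, DifferentiableAt ℝ q z) (hpdx : DifferentiableAt ℝ (pdx q) p)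
    (hson : ∀ᶠ y in 𝓝 p.2, q (p.1, y) = cstar γ) (hchap : chap γ q p) : pdx q p = 0 := by
  obtain ⟨a, ha, hA⟩ := exists_hasDerivAt_Aprime_cstar hγ
  have hqp : q (p.1, p.2) = cstar γ := hson.self_of_nhds
  have hB : pdy (pdy fun z => Bfun γ (q z)) p = 0 :=
    pdy_pdy_eq_zero_of_eventually_const (c := Bfun γ (cstar γ)) (hson.mono fun y hy => by rw [hy])
  -- since `A'(c_*) = 0`, only the term `A''(c_*) q_φ²` of `∂²_φ A(q)` survives
  have hA2 : pdx (pdx fun z => Afun γ (q z)) p = a * pdx q p ^ 2 := by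
    refine deriv_deriv_comp_of_deriv_eq_zero (f := fun x => q (x, p.2)) ?_ (hqp ▸ hA)
      (hqp ▸ Aprime_cstar hγ) ?_ hpdx.hasDerivAt_pdx.differentiableAt
    · rw [hqp]
      filter_upwards [isOpen_Ioo.mem_nhds (cstar_mem_Ioo hγ)] with y hy using hasDerivAt_Afun hγ hy
    · have hslice : Tendsto (fun x => (x, p.2)) (𝓝 p.1) (𝓝 p) :=
        (continuous_id.prodMk continuous_const).tendsto p.1
      exact (hslice.eventually hq).mono fun x hx => hx.hasDerivAt_pdx
  rw [chap, hA2, hB, add_zero] at hchap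
  exact pow_eq_zero_iff two_ne_zero |>.1 ((mul_eq_zero.1 hchap).resolve_left ha.ne)

theorem pdx_eq_zero_on_sonic_segment (hγ : 1 < γ) {V : Set (ℝ × ℝ)} {φ0 ψa ψb : ℝ}
    (hab : ψa < ψb) (hV : IsOpen V) (hseg : ∀ ψ ∈ Icc ψa ψb, (φ0, ψ) ∈ V)
    (hq : ContDiffOn ℝ 2 q V) (hchap : ∀ ψ ∈ Ioo ψa ψb, chap γ q (φ0, ψ))
    (hson : ∀ ψ ∈ Icc ψa ψb, q (φ0, ψ) = cstar γ) :
    ∀ ψ ∈ Icc ψa ψb, pdx q (φ0, ψ) = 0 := by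
  have hpdx : ContDiffOn ℝ 1 (pdx q) V := hq.pdx hV (by norm_num)
  have hint : EqOn (fun ψ => pdx q (φ0, ψ)) 0 (Ioo ψa ψb) := fun ψ hψ => by
    have hmem := hV.mem_nhds (hseg ψ (Ioo_subset_Icc_self hψ))
    refine pdx_eq_zero_of_chap_of_sonic hγ ?_ ((hpdx.differentiableOn one_ne_zero).differentiableAt
      hmem) ?_ (hchap ψ hψ)
    · filter_upwards [hmem] with z hz
      exact (hq.differentiableOn (by norm_num)).differentiableAt (hV.mem_nhds hz)
    · filter_upwards [isOpen_Ioo.mem_nhds hψ] with y hy using hson y (Ioo_subset_Icc_self hy)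
  have hcont : ContinuousOn (fun ψ => pdx q (φ0, ψ)) (Icc ψa ψb) :=
    hpdx.continuousOn.comp (continuous_const.prodMk continuous_id).continuousOn hseg
  exact fun ψ hψ => hint.of_subset_closure hcont continuousOn_const Ioo_subset_Icc_self
    (closure_Ioo hab.ne).ge hψ

theorem exists_le_add_mul_sq_of_pdx_eq_zero {V : Set (ℝ × ℝ)} {φ0 δ ψa ψb : ℝ} (hV : IsOpen V)
    (hRV : Icc φ0 (φ0 + δ) ×ˢ Icc ψa ψb ⊆ V) (hq : ContDiffOn ℝ 2 q V)
    (hpdx : ∀ ψ ∈ Icc ψa ψb, pdx q (φ0, ψ) = 0) :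
    ∃ M, ∀ p ∈ Icc φ0 (φ0 + δ) ×ˢ Icc ψa ψb, q p ≤ q (φ0, p.2) + M * (p.1 - φ0) ^ 2 := by
  have hq1 : ContDiffOn ℝ 1 (pdx q) V := hq.pdx hV (by norm_num)
  have hq0 : ContDiffOn ℝ 0 (pdx (pdx q)) V := hq1.pdx hV (by norm_num)
  obtain ⟨M, hM⟩ := (isCompact_Icc.prod isCompact_Icc).bddAbove_image (hq0.continuousOn.mono hRV)
  refine ⟨M / 2, fun ⟨x, ψ⟩ ⟨hx, hψ⟩ => ?_⟩
  have hmem : ∀ y ∈ Icc φ0 (φ0 + δ), (y, ψ) ∈ V := fun y hy => hRV ⟨hy, hψ⟩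
  exact image_le_add_mul_sq_of_deriv_eq_zero (f := fun y => q (y, ψ))
    (fun y hy => ((hq.differentiableOn (by norm_num)).differentiableAt
      (hV.mem_nhds (hmem y hy))).hasDerivAt_pdx)
    (fun y hy => ((hq1.differentiableOn one_ne_zero).differentiableAt
      (hV.mem_nhds (hmem y hy))).hasDerivAt_pdx)
    (fun y hy => hM ⟨(y, ψ), ⟨hy, hψ⟩, rfl⟩) (hpdx ψ hψ) hx

theorem exists_characteristic_slope_le (hγ : 1 < γ) {V : Set (ℝ × ℝ)} {φ0 δ ψa ψb : ℝ}
    (hV : IsOpen V) (hRV : Icc φ0 (φ0 + δ) ×ˢ Icc ψa ψb ⊆ V) (hq : ContDiffOn ℝ 2 q V)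
    (hson : ∀ ψ ∈ Icc ψa ψb, q (φ0, ψ) = cstar γ)
    (hrange : ∀ p ∈ Icc φ0 (φ0 + δ) ×ˢ Icc ψa ψb, cstar γ ≤ q p ∧ q p < qmaxF γ)
    (hpdx : ∀ ψ ∈ Icc ψa ψb, pdx q (φ0, ψ) = 0) :
    ∃ C, ∀ p ∈ Icc φ0 (φ0 + δ) ×ˢ Icc ψa ψb,
      √(-deriv (Afun γ) (q p) / deriv (Bfun γ) (q p)) ≤ C * (p.1 - φ0) := by
  rcases (Icc φ0 (φ0 + δ) ×ˢ Icc ψa ψb).eq_empty_or_nonempty with hR | hR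
  · exact ⟨0, by simp [hR]⟩
  obtain ⟨p₀, hp₀, hmax⟩ :=
    (isCompact_Icc.prod isCompact_Icc).exists_isMaxOn hR (hq.continuousOn.mono hRV)
  obtain ⟨K, hK, hKle⟩ :=
    exists_neg_deriv_Afun_div_deriv_Bfun_le hγ (hrange p₀ hp₀).1 (hrange p₀ hp₀).2
  obtain ⟨M, hM⟩ := exists_le_add_mul_sq_of_pdx_eq_zero hV hRV hq hpdx
  refine ⟨√(K * M), fun p hp => ?_⟩
  have hqp : q p - cstar γ ≤ M * (p.1 - φ0) ^ 2 := by
    linarith [hM p hp, hson p.2 hp.2]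
  calc √(-deriv (Afun γ) (q p) / deriv (Bfun γ) (q p))
      ≤ √(K * M * (p.1 - φ0) ^ 2) := sqrt_le_sqrt <| calc
        _ ≤ K * (q p - cstar γ) := hKle (q p) ⟨(hrange p hp).1, isMaxOn_iff.1 hmax p hp⟩
        _ ≤ K * (M * (p.1 - φ0) ^ 2) := mul_le_mul_of_nonneg_left hqp hK
        _ = K * M * (p.1 - φ0) ^ 2 := by ring
    _ = √(K * M) * (p.1 - φ0) := by rw [sqrt_mul' _ (sq_nonneg _), sqrt_sq (sub_nonneg.2 hp.1.1)]

end Sonic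

/-- on a vertical sonic segment all characteristics from the sonic
points coincide with the segment itself (Lemma `nov-lemma000`). -/
theorem stmt_14 (γ : ℝ) (hγ : 1 < γ)
    (δ : ℝ) (hδ : 0 < δ) (ψa ψb φ0 : ℝ) (hab : ψa < ψb)
    (V : Set (ℝ × ℝ)) (hV : IsOpen V)
    (hRV : Icc φ0 (φ0 + δ) ×ˢ Icc ψa ψb ⊆ V)
    (q : ℝ × ℝ → ℝ) (hq : ContDiffOn ℝ 2 q V)
    (hPDE : ∀ p ∈ Icc φ0 (φ0 + δ) ×ˢ Icc ψa ψb, chap γ q p)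
    (hson : ∀ ψ ∈ Icc ψa ψb, q (φ0, ψ) = cstar γ)
    (hrange : ∀ p ∈ Icc φ0 (φ0 + δ) ×ˢ Icc ψa ψb, cstar γ ≤ q p ∧ q p < qmaxF γ) :
    -- (a) the sonic segment consists of exceptional-type points: q_φ = 0 on it
    (∀ ψ ∈ Icc ψa ψb, pdx q (φ0, ψ) = 0) ∧
    -- (b) the unique characteristic issuing from a sonic point is the segment itself
    (∀ ψ' ∈ Ico ψa ψb, ∀ Φ : ℝ → ℝ,
      ContinuousOn Φ (Icc ψ' ψb) →
      (∀ ψ ∈ Icc ψ' ψb, Φ ψ ∈ Icc φ0 (φ0 + δ)) →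
      Φ ψ' = φ0 →
      (∀ ψ ∈ Ioc ψ' ψb, HasDerivWithinAt Φ
        (Real.sqrt (-(deriv (Afun γ) (q (Φ ψ, ψ))) / deriv (Bfun γ) (q (Φ ψ, ψ))))
        (Icc ψ' ψb) ψ) →
      ∀ ψ ∈ Icc ψ' ψb, Φ ψ = φ0) := by
  have hseg : ∀ ψ ∈ Icc ψa ψb, (φ0, ψ) ∈ Icc φ0 (φ0 + δ) ×ˢ Icc ψa ψb :=
    fun ψ hψ => ⟨left_mem_Icc.2 (by linarith), hψ⟩
  have hpdx := pdx_eq_zero_on_sonic_segment hγ hab hV (fun ψ hψ => hRV (hseg ψ hψ)) hq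
    (fun ψ hψ => hPDE _ (hseg ψ (Ioo_subset_Icc_self hψ))) hson
  refine ⟨hpdx, fun ψ' hψ' Φ hΦc hΦR hΦ0 hΦ' ψ hψ => ?_⟩
  obtain ⟨C, hC⟩ := exists_characteristic_slope_le hγ hV hRV hq hson hrange hpdx
  -- `Φ - φ₀ ≥ 0` vanishes at `ψ'` and grows at most linearly in itself, so Gronwall applies
  have hle : Φ ψ - φ0 ≤ 0 := image_nonpos_of_deriv_le_mul (hΦc.sub continuousOn_const)
    (fun t ht => ((hΦ' t ⟨ht.1, ht.2.le⟩).hasDerivAt (Icc_mem_nhds ht.1 ht.2)).sub_const φ0)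
    (fun t ht => hC (Φ t, t) ⟨hΦR t (Ioo_subset_Icc_self ht), hψ'.1.trans ht.1.le, ht.2.le⟩)
    (sub_eq_zero.2 hΦ0) hψ
  linarith [(hΦR ψ hψ).1]
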